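/- arXiv:2111.06607 — 3 statements merged into one kernel-verified Lean document; each statement's English description precedes it below -/
import Mathlib

section
/- Let L be a real Lie algebra and Φ : L → so(3,ℝ) a homomorphism of Lie algebras. If h ⊆ L is a Lie subalgebra with dim h = 2, then there exists a nonzero element X ∈ h with Φ(X) = 0. -/
/-!
If `Φ` were injective on `h`, it would carry `h` onto a 2-dimensional Lie subalgebra of
`so(3,ℝ)`. Via `u ↦ (w ↦ u ×₃ w)`, `so(3,ℝ)` is `ℝ³` with the cross product as bracket.
But for independent `u`, `v` the vector `u ×₃ v` is nonzero and orthogonal to both, so it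
is never in the span of `u` and `v`.
-/

attribute [local instance 100] LieRing.ofAssociativeRing

/-- `so(3,ℝ)`: the Lie algebra of real 3×3 skew-symmetric matrices,
realised as a Lie subalgebra of the matrix Lie algebra. -/
noncomputable def so3 : LieSubalgebra ℝ (Matrix (Fin 3) (Fin 3) ℝ) :=
  skewAdjointMatricesLieSubalgebra (1 : Matrix (Fin 3) (Fin 3) ℝ)

open Matrix Module

theorem cross_eq_zero_of_eq_smul_add_smul {R : Type*} [CommRing R] [LinearOrder R]
    [IsStrictOrderedRing R] {u v : Fin 3 → R} {a b : R} (h : u ⨯₃ v = a • u + b • v) :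
    u ⨯₃ v = 0 := by
  refine dotProduct_self_eq_zero.mp ?_
  nth_rw 1 [h]
  simp only [add_dotProduct, smul_dotProduct, dot_self_cross, dot_cross_self, smul_zero,
    add_zero]

section crossMatrix

variable {R : Type*} [CommRing R]

noncomputable def crossMatrix : (Fin 3 → R) →ₗ[R] Matrix (Fin 3) (Fin 3) R :=
  LinearMap.toMatrix'.toLinearMap ∘ₗ crossProduct

theorem crossMatrix_eq (u : Fin 3 → R) :
    crossMatrix u = !![0, -u 2, u 1; u 2, 0, -u 0; -u 1, u 0, 0] := by
  ext i j
  fin_cases i <;> fin_cases j <;> simp [crossMatrix, cross_apply]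

theorem crossMatrix_injective : Function.Injective (crossMatrix (R := R)) := by
  intro u v huv
  rw [crossMatrix_eq, crossMatrix_eq] at huv
  ext i
  fin_cases i
  · exact congrFun (congrFun huv 2) 1
  · exact congrFun (congrFun huv 0) 2
  · exact congrFun (congrFun huv 1) 0

theorem crossMatrix_cross (u v : Fin 3 → R) :
    crossMatrix (u ⨯₃ v) = ⁅crossMatrix u, crossMatrix v⁆ := by
  have hbracket : crossProduct (u ⨯₃ v) =
      crossProduct u * crossProduct v - crossProduct v * crossProduct u := by
    refine LinearMap.ext fun w => ?_
    rw [LinearMap.sub_apply, End.mul_apply, End.mul_apply, cross_cross]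
  simp only [crossMatrix, LinearMap.comp_apply, LinearEquiv.coe_coe, hbracket, map_sub,
    LinearMap.toMatrix'_mul, LieRing.of_associative_ring_bracket]

end crossMatrix

theorem exists_crossMatrix_eq_of_mem_so3 {A : Matrix (Fin 3) (Fin 3) ℝ} (hA : A ∈ so3) :
    ∃ u, crossMatrix u = A := by
  rw [so3, mem_skewAdjointMatricesLieSubalgebra, mem_skewAdjointMatricesSubmodule,
    Matrix.IsSkewAdjoint, Matrix.IsAdjointPair, Matrix.mul_one, Matrix.one_mul] at hA
  refine ⟨![A 2 1, A 0 2, A 1 0], ?_⟩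
  have hskew (i j : Fin 3) : A j i = -A i j := by simpa using congrFun (congrFun hA i) j
  rw [crossMatrix_eq]
  ext i j
  fin_cases i <;> fin_cases j <;> simp <;>
    linarith [hskew 0 0, hskew 1 1, hskew 2 2, hskew 0 1, hskew 0 2, hskew 1 2]

theorem not_linearIndependent_of_lie_eq {A : Fin 2 → so3} {a b : ℝ}
    (hA : ⁅A 0, A 1⁆ = a • A 0 + b • A 1) : ¬ LinearIndependent ℝ A := by
  intro hind
  obtain ⟨u, hu⟩ := exists_crossMatrix_eq_of_mem_so3 (A 0).2
  obtain ⟨v, hv⟩ := exists_crossMatrix_eq_of_mem_so3 (A 1).2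
  have hcross : u ⨯₃ v = a • u + b • v := crossMatrix_injective <| by
    simpa [crossMatrix_cross, hu, hv] using congrArg Subtype.val hA
  have huv : LinearIndependent ℝ ![u, v] := by
    have hcomp : crossMatrix ∘ ![u, v] = so3.incl ∘ A := by
      ext i : 1
      fin_cases i <;> simp [hu, hv]
    refine LinearIndependent.of_comp crossMatrix ?_
    rw [hcomp]
    exact hind.map' so3.incl.toLinearMap (LinearMap.ker_eq_bot.mpr Subtype.val_injective)
  exact crossProduct_ne_zero_iff_linearIndependent.mpr huv
    (cross_eq_zero_of_eq_smul_add_smul hcross)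

theorem not_injective_of_finrank_eq_two {K : Type*} [LieRing K] [LieAlgebra ℝ K]
    (hK : finrank ℝ K = 2) (f : K →ₗ⁅ℝ⁆ so3) : ¬ Function.Injective f := by
  intro hf
  have : Module.Finite ℝ K := finite_of_finrank_eq_succ hK
  let e := finBasisOfFinrankEq ℝ K hK
  set c := e.repr ⁅e 0, e 1⁆
  have he : ⁅e 0, e 1⁆ = c 0 • e 0 + c 1 • e 1 := by
    rw [← Fin.sum_univ_two (fun i => c i • e i), e.sum_repr]
  refine not_linearIndependent_of_lie_eq (A := f ∘ e) (a := c 0) (b := c 1) ?_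
    (e.linearIndependent.map' f.toLinearMap (LinearMap.ker_eq_bot.mpr hf))
  simp only [Function.comp_apply]
  rw [← LieHom.map_lie, he, map_add, map_smul, map_smul]

/-- If `Φ : L → so(3,ℝ)` is a Lie algebra homomorphism and `h ⊆ L` is a
2-dimensional Lie subalgebra, then `Φ` kills some nonzero element of `h`. -/
theorem exists_nonzero_in_ker_of_dim_two_subalgebra
    (L : Type*) [LieRing L] [LieAlgebra ℝ L]
    (Φ : L →ₗ⁅ℝ⁆ so3)
    (h : LieSubalgebra ℝ L) (hdim : Module.finrank ℝ h = 2) :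
    ∃ X ∈ h, X ≠ 0 ∧ Φ X = 0 := by
  have hΦ := not_injective_of_finrank_eq_two hdim (Φ.comp h.incl)
  rw [injective_iff_map_eq_zero] at hΦ
  push Not at hΦ
  obtain ⟨X, hΦX, hX⟩ := hΦ
  exact ⟨X, X.2, by simpa using hX, hΦX⟩
end

section
/- Let V be a real vector space, φ ∈ ℝ, and θ₁, θ₂, θ₃, θ₄ ∈ V. Define θ₁' = cos φ·θ₄ + sin φ·θ₃, θ₂' = −cos φ·θ₂ + sin φ·θ₁, θ₃' = sin φ·θ₄ − cos φ·θ₃, θ₄' = −sin φ·θ₂ − cos φ·θ₁ in V. Then in the exterior algebra of V one has θ₁∧θ₃ + θ₂∧θ₄ = cos(2φ)·(θ₁'∧θ₂' − θ₃'∧θ₄') + sin(2φ)·(θ₁'∧θ₄' + θ₃'∧θ₂'). -/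
/-!
Writing `ω = θ₁∧θ₃ + θ₂∧θ₄` and `η = θ₁∧θ₄ + θ₃∧θ₂`, the two wedge combinations of the
rotated coframe are the components of `(ω, η)` rotated by the angle `2φ`:
`θ₁'∧θ₂' - θ₃'∧θ₄' = cos 2φ • ω - sin 2φ • η` and `θ₁'∧θ₄' + θ₃'∧θ₂' = sin 2φ • ω + cos 2φ • η`.
Rotating back by `-2φ` recovers `ω`. (In complex terms, `θ₁' + iθ₃' = e^{iφ}(θ₄ - iθ₃)` and
`θ₂' + iθ₄' = -e^{iφ}(θ₂ + iθ₁)`.)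
-/

open Real

namespace ExteriorAlgebra

variable {R M : Type*} [CommRing R] [AddCommGroup M] [Module R M]

theorem ι_mul_swap (x y : M) : ι R y * ι R x = -(ι R x * ι R y) :=
  eq_neg_of_add_eq_zero_left (ι_add_mul_swap y x)

variable (c s : R) (θ₁ θ₂ θ₃ θ₄ : M)

theorem rotated_coframe_wedge_sub :
    ι R (c • θ₄ + s • θ₃) * ι R (-c • θ₂ + s • θ₁) - ι R (s • θ₄ - c • θ₃) * ι R (-s • θ₂ - c • θ₁) =
      (c ^ 2 - s ^ 2) • (ι R θ₁ * ι R θ₃ + ι R θ₂ * ι R θ₄) -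
        (2 * s * c) • (ι R θ₁ * ι R θ₄ + ι R θ₃ * ι R θ₂) := by
  simp only [map_add, map_sub, map_smul, neg_smul, map_neg, add_mul, mul_add, sub_mul, mul_sub,
    mul_neg, smul_mul_assoc, mul_smul_comm, ι_mul_swap θ₁ θ₃, ι_mul_swap θ₁ θ₄, ι_mul_swap θ₂ θ₃,
    ι_mul_swap θ₂ θ₄]
  match_scalars <;> ring

theorem rotated_coframe_wedge_add :
    ι R (c • θ₄ + s • θ₃) * ι R (-s • θ₂ - c • θ₁) + ι R (s • θ₄ - c • θ₃) * ι R (-c • θ₂ + s • θ₁) =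
      (2 * s * c) • (ι R θ₁ * ι R θ₃ + ι R θ₂ * ι R θ₄) +
        (c ^ 2 - s ^ 2) • (ι R θ₁ * ι R θ₄ + ι R θ₃ * ι R θ₂) := by
  simp only [map_add, map_sub, map_smul, neg_smul, map_neg, add_mul, mul_add, sub_mul, mul_sub,
    mul_neg, smul_mul_assoc, mul_smul_comm, ι_mul_swap θ₁ θ₃, ι_mul_swap θ₁ θ₄, ι_mul_swap θ₂ θ₃,
    ι_mul_swap θ₂ θ₄]
  match_scalars <;> ring

end ExteriorAlgebra

/-- The rotated coframe identity
`θ₁∧θ₃ + θ₂∧θ₄ = cos(2φ)(θ₁'∧θ₂' - θ₃'∧θ₄') + sin(2φ)(θ₁'∧θ₄' + θ₃'∧θ₂')` in the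
exterior algebra of `V`. -/
theorem rotated_coframe_wedge_identity_J
    (V : Type*) [AddCommGroup V] [Module ℝ V]
    (φ : ℝ) (θ₁ θ₂ θ₃ θ₄ : V) :
    let ι := ExteriorAlgebra.ι ℝ (M := V)
    let θ₁' : V := cos φ • θ₄ + sin φ • θ₃
    let θ₂' : V := -cos φ • θ₂ + sin φ • θ₁
    let θ₃' : V := sin φ • θ₄ - cos φ • θ₃
    let θ₄' : V := -sin φ • θ₂ - cos φ • θ₁
    ι θ₁ * ι θ₃ + ι θ₂ * ι θ₄ =
      cos (2 * φ) • (ι θ₁' * ι θ₂' - ι θ₃' * ι θ₄') +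
        sin (2 * φ) • (ι θ₁' * ι θ₄' + ι θ₃' * ι θ₂') := by
  dsimp only
  rw [ExteriorAlgebra.rotated_coframe_wedge_sub, ExteriorAlgebra.rotated_coframe_wedge_add,
    ← cos_two_mul', ← sin_two_mul]
  generalize ExteriorAlgebra.ι ℝ θ₁ * ExteriorAlgebra.ι ℝ θ₃ +
    ExteriorAlgebra.ι ℝ θ₂ * ExteriorAlgebra.ι ℝ θ₄ = ω
  generalize ExteriorAlgebra.ι ℝ θ₁ * ExteriorAlgebra.ι ℝ θ₄ +
    ExteriorAlgebra.ι ℝ θ₃ * ExteriorAlgebra.ι ℝ θ₂ = η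
  match_scalars
  · linear_combination -sin_sq_add_cos_sq (2 * φ)
  · ring
end

section
/- Let V be a 4-dimensional real inner product space and I : V → V a linear isometry with I ∘ I = −id. Let e₃, e₄ ∈ V be orthonormal vectors with I e₃ = e₄, let D₁ = span{e₃, e₄} and let D₀ be the orthogonal complement of D₁ (which is I-invariant). Then for every 2-dimensional I-invariant subspace D of V with D ≠ D₀ and D ≠ D₁, there exist a unit vector e₁ ∈ D₀ and an angle φ ∈ ℝ such that D = span{−cos φ·e₃ + sin φ·e₁, −cos φ·e₄ + sin φ·(I e₁)}. -/
/-!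
Since `I ∘ I = -id`, the operator `I` has no real eigenvector, so an `I`-invariant plane `D` is
spanned by `w` and `I w` for any nonzero `w ∈ D`. Take `w ∈ D` a unit vector orthogonal to `e₄`.
Its component orthogonal to `e₃` then lies in `D₀ = D₁ᗮ`, so `w = -cos φ • e₃ + sin φ • e₁` for a
unit vector `e₁ ∈ D₀` (any one, if that component vanishes), and applying `I` gives
`I w = -cos φ • e₄ + sin φ • I e₁`.
-/

open Module RealInnerProductSpace

section ComplexStructure

variable {V : Type*} [AddCommGroup V] [Module ℝ V] {I : V →ₗ[ℝ] V}

theorem linearIndependent_pair_apply_of_apply_apply_eq_neg (hI2 : ∀ v, I (I v) = -v)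
    {x : V} (hx : x ≠ 0) : LinearIndependent ℝ ![x, I x] := by
  refine LinearIndependent.pair_iff.mpr fun s t hst => ?_
  have hIst : s • I x - t • x = 0 := by
    simpa [hI2, sub_eq_add_neg, add_comm] using congrArg I hst
  have : (s ^ 2 + t ^ 2) • x = 0 := by
    linear_combination (norm := module) s • hst - t • hIst
  have hsq : s ^ 2 + t ^ 2 = 0 := (smul_eq_zero.mp this).resolve_right hx
  constructor <;> nlinarith [sq_nonneg s, sq_nonneg t]

theorem Submodule.eq_span_pair_apply_of_finrank_eq_two (hI2 : ∀ v, I (I v) = -v)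
    {D : Submodule ℝ V} (hD2 : finrank ℝ D = 2) (hDinv : ∀ v ∈ D, I v ∈ D)
    {x : V} (hxD : x ∈ D) (hx : x ≠ 0) : D = span ℝ {x, I x} := by
  have : FiniteDimensional ℝ D := Module.finite_of_finrank_eq_succ hD2
  have hle : span ℝ {x, I x} ≤ D := by
    rw [span_le, Set.insert_subset_iff, Set.singleton_subset_iff]
    exact ⟨hxD, hDinv x hxD⟩
  refine (eq_of_le_of_finrank_le hle ?_).symm
  have := finrank_span_eq_card (linearIndependent_pair_apply_of_apply_apply_eq_neg hI2 hx)
  rw [Matrix.range_cons_cons_empty] at this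
  simp [hD2, this]

end ComplexStructure

section InnerProduct

variable {V : Type*} [NormedAddCommGroup V] [InnerProductSpace ℝ V]

theorem Submodule.exists_norm_eq_one_inner_eq_zero {D : Submodule ℝ V} (hD : 1 < finrank ℝ D)
    (y : V) : ∃ w ∈ D, ‖w‖ = 1 ∧ ⟪y, w⟫ = 0 := by
  have : FiniteDimensional ℝ D := Module.finite_of_finrank_pos (by omega)
  have hker : LinearMap.ker ((innerₛₗ ℝ y).comp D.subtype) ≠ ⊥ :=
    LinearMap.ker_ne_bot_of_finrank_lt (by rwa [finrank_self])
  obtain ⟨⟨w, hwD⟩, hw, hw0⟩ := exists_mem_ne_zero_of_ne_bot hker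
  have hw0 : w ≠ 0 := fun h => hw0 (Subtype.ext h)
  refine ⟨(‖w‖⁻¹ : ℝ) • w, D.smul_mem _ hwD, norm_smul_inv_norm hw0, ?_⟩
  rw [real_inner_smul_right, show ⟪y, w⟫ = 0 from hw, mul_zero]

theorem Submodule.exists_norm_eq_one_mem_eq_norm_smul {K : Submodule ℝ V} (hK : K ≠ ⊥)
    {u : V} (hu : u ∈ K) : ∃ e ∈ K, ‖e‖ = 1 ∧ u = ‖u‖ • e := by
  by_cases hu0 : u = 0
  · obtain ⟨v, hvK, hv0⟩ := exists_mem_ne_zero_of_ne_bot hK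
    exact ⟨(‖v‖⁻¹ : ℝ) • v, K.smul_mem _ hvK, norm_smul_inv_norm hv0, by simp [hu0]⟩
  · refine ⟨(‖u‖⁻¹ : ℝ) • u, K.smul_mem _ hu, norm_smul_inv_norm hu0, ?_⟩
    rw [smul_smul, mul_inv_cancel₀ (norm_ne_zero_iff.mpr hu0), one_smul]

theorem Submodule.orthogonal_span_pair_ne_bot (hV : 2 < finrank ℝ V) (a b : V) :
    (span ℝ {a, b})ᗮ ≠ ⊥ := by
  have : FiniteDimensional ℝ V := Module.finite_of_finrank_pos (by omega)
  intro h
  have hsum := finrank_add_finrank_orthogonal (span ℝ {a, b})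
  have hspan : finrank ℝ (span ℝ {a, b}) ≤ 2 := by
    have := finrank_range_le_card (R := ℝ) ![a, b]
    rwa [Matrix.range_cons_cons_empty, Fintype.card_fin] at this
  rw [h, finrank_bot] at hsum
  omega

theorem Submodule.mem_orthogonal_span_pair {a b v : V} :
    v ∈ (span ℝ {a, b})ᗮ ↔ ⟪a, v⟫ = 0 ∧ ⟪b, v⟫ = 0 := by
  rw [span_insert, ← inf_orthogonal, mem_inf, mem_orthogonal_singleton_iff_inner_right,
    mem_orthogonal_singleton_iff_inner_right]

theorem norm_sub_inner_smul_sq {e : V} (he : ‖e‖ = 1) (w : V) :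
    ‖w - ⟪e, w⟫ • e‖ ^ 2 = ‖w‖ ^ 2 - ⟪e, w⟫ ^ 2 := by
  rw [norm_sub_sq_real, norm_smul, real_inner_smul_right, he, real_inner_comm, Real.norm_eq_abs]
  ring_nf
  rw [sq_abs]
  ring

end InnerProduct

theorem Real.exists_cos_eq_sin_eq {c s : ℝ} (hcs : c ^ 2 + s ^ 2 = 1) (hs : 0 ≤ s) :
    ∃ φ, cos φ = c ∧ sin φ = s := by
  refine ⟨arccos c, cos_arccos (by nlinarith) (by nlinarith), ?_⟩
  rw [sin_arccos, ← hcs, add_sub_cancel_left, sqrt_sq hs]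

theorem invariant_plane_normal_form_general
    (V : Type*) [NormedAddCommGroup V] [InnerProductSpace ℝ V]
    (hdim : Module.finrank ℝ V = 4)
    (I : V →ₗ[ℝ] V)
    (hI2 : ∀ v : V, I (I v) = -v)
    (e₃ e₄ : V) (he₃ : ‖e₃‖ = 1) (horth : ⟪e₃, e₄⟫ = 0)
    (hIe₃ : I e₃ = e₄)
    (D : Submodule ℝ V)
    (hD2 : Module.finrank ℝ D = 2)
    (hDinv : ∀ v ∈ D, I v ∈ D) :
    ∃ (e₁ : V) (φ : ℝ), ‖e₁‖ = 1 ∧ e₁ ∈ (Submodule.span ℝ ({e₃, e₄} : Set V))ᗮ ∧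
      D = Submodule.span ℝ
        ({-(Real.cos φ) • e₃ + Real.sin φ • e₁,
          -(Real.cos φ) • e₄ + Real.sin φ • (I e₁)} : Set V) := by
  obtain ⟨w, hwD, hw, hwe₄⟩ := D.exists_norm_eq_one_inner_eq_zero (by omega) e₄
  set u := w - ⟪e₃, w⟫ • e₃
  have hu : u ∈ (Submodule.span ℝ ({e₃, e₄} : Set V))ᗮ := by
    rw [Submodule.mem_orthogonal_span_pair, inner_sub_right, inner_sub_right,
      real_inner_smul_right, real_inner_smul_right, real_inner_self_eq_norm_sq, he₃,
      real_inner_comm e₃ e₄, horth, hwe₄]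
    constructor <;> ring
  obtain ⟨e₁, he₁D₀, he₁, hue₁⟩ := Submodule.exists_norm_eq_one_mem_eq_norm_smul
    (Submodule.orthogonal_span_pair_ne_bot (by omega) e₃ e₄) hu
  obtain ⟨φ, hcos, hsin⟩ : ∃ φ, Real.cos φ = -⟪e₃, w⟫ ∧ Real.sin φ = ‖u‖ := by
    refine Real.exists_cos_eq_sin_eq ?_ (norm_nonneg u)
    rw [norm_sub_inner_smul_sq he₃, hw]
    ring
  have hw_eq : -Real.cos φ • e₃ + Real.sin φ • e₁ = w := by
    rw [hcos, hsin, ← hue₁, neg_neg, add_sub_cancel]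
  have hIw_eq : -Real.cos φ • e₄ + Real.sin φ • I e₁ = I w := by
    rw [← hIe₃, ← map_smul, ← map_smul, ← map_add, hw_eq]
  refine ⟨e₁, φ, he₁, he₁D₀, ?_⟩
  rw [hw_eq, hIw_eq]
  exact D.eq_span_pair_apply_of_finrank_eq_two hI2 hD2 hDinv hwD (norm_ne_zero_iff.mp (by simp [hw]))

/-- Lemma C (pointwise linear-algebra content): in a 4-dimensional real inner product
space with an orthogonal complex structure `I`, any 2-dimensional `I`-invariant
subspace `D` different from `D₁ = span{e₃, e₄}` and `D₀ = D₁ᗮ` is of the form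
`span{-cos φ • e₃ + sin φ • e₁, -cos φ • e₄ + sin φ • (I e₁)}` for some unit vector
`e₁ ∈ D₀` and some angle `φ`. -/
theorem invariant_plane_normal_form
    (V : Type*) [NormedAddCommGroup V] [InnerProductSpace ℝ V]
    (hdim : Module.finrank ℝ V = 4)
    (I : V →ₗ[ℝ] V)
    (hiso : ∀ v : V, ‖I v‖ = ‖v‖)
    (hI2 : ∀ v : V, I (I v) = -v)
    (e₃ e₄ : V) (he₃ : ‖e₃‖ = 1) (he₄ : ‖e₄‖ = 1) (horth : ⟪e₃, e₄⟫ = 0)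
    (hIe₃ : I e₃ = e₄)
    (D : Submodule ℝ V)
    (hD2 : Module.finrank ℝ D = 2)
    (hDinv : ∀ v ∈ D, I v ∈ D)
    (hD0 : D ≠ (Submodule.span ℝ ({e₃, e₄} : Set V))ᗮ)
    (hD1 : D ≠ Submodule.span ℝ ({e₃, e₄} : Set V)) :
    ∃ (e₁ : V) (φ : ℝ), ‖e₁‖ = 1 ∧ e₁ ∈ (Submodule.span ℝ ({e₃, e₄} : Set V))ᗮ ∧
      D = Submodule.span ℝ
        ({-(Real.cos φ) • e₃ + Real.sin φ • e₁,
          -(Real.cos φ) • e₄ + Real.sin φ • (I e₁)} : Set V) :=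
  invariant_plane_normal_form_general V hdim I hI2 e₃ e₄ he₃ horth hIe₃ D hD2 hDinv
end
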